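/- Let n ≥ 1 and let |GHZ_n⟩ = (|0⟩⊗ⁿ + |1⟩⊗ⁿ)/√2 ∈ (ℂ²)^{⊗n}. For each input string x ∈ {0,1}ⁿ, let O_{xᵢ} be σ_y if xᵢ = 0 and σ_x if xᵢ = 1, and consider the tensor-product observable ⊗ᵢ O_{xᵢ}. If the number of indices i with xᵢ = 0 equals 2k for a nonnegative integer k (equivalently Σᵢ xᵢ = n − 2k), then ⟨GHZ_n| ⊗ᵢ O_{xᵢ} |GHZ_n⟩ = (−1)^k. In particular, these measurements on |GHZ_n⟩ satisfy all the constraints of the n-party Mermin inequality, attaining its maximal violation. -/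
import Mathlib


open Matrix Finset Complex

/-- Pauli `σ_x`. -/
noncomputable def pauliX : Matrix (Fin 2) (Fin 2) ℂ := !![0, 1; 1, 0]

/-- Pauli `σ_y`. -/
noncomputable def pauliY : Matrix (Fin 2) (Fin 2) ℂ := !![0, -Complex.I; Complex.I, 0]

/-- The `n`-qubit GHZ state `(|0⟩^{⊗n} + |1⟩^{⊗n})/√2`, as a vector on `{0,1}ⁿ`. -/
noncomputable def ghzN (n : ℕ) : (Fin n → Fin 2) → ℂ :=
  fun f => if f = (fun _ => 0) ∨ f = (fun _ => 1) then ((Real.sqrt 2 : ℂ))⁻¹ else 0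

/-- The tensor-product observable `⊗ᵢ O_{xᵢ}`, where `O_{xᵢ} = σ_y` if `xᵢ = 0` and
`O_{xᵢ} = σ_x` if `xᵢ = 1`, realized as a matrix on `{0,1}ⁿ × {0,1}ⁿ` with entries
`∏ᵢ O_{xᵢ}(fᵢ, gᵢ)`. -/
noncomputable def merminObs (n : ℕ) (x : Fin n → Fin 2) :
    Matrix (Fin n → Fin 2) (Fin n → Fin 2) ℂ :=
  Matrix.of fun f g => ∏ i, (if x i = 1 then pauliX else pauliY) (f i) (g i)

lemma fin2_not_one (a : Fin 2) : (¬ a = 1) ↔ a = 0 := by fin_cases a <;> simp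

/-- **Maximal quantum violation of the Mermin inequality.** If the input string
`x ∈ {0,1}ⁿ` has an even number `2k` of indices with `xᵢ = 0` (equivalently
`Σᵢ xᵢ = n − 2k`), then the GHZ expectation of `⊗ᵢ O_{xᵢ}` equals `(−1)^k`. -/
theorem ghz_mermin_correlator (n : ℕ) (hn : 1 ≤ n) (x : Fin n → Fin 2) (k : ℕ)
    (hk : (Finset.univ.filter (fun i => x i = 0)).card = 2 * k) :
    star (ghzN n) ⬝ᵥ (merminObs n x *ᵥ ghzN n) = (-1 : ℂ) ^ k := by
  set z : Fin n → Fin 2 := fun _ => 0 with hz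
  set o : Fin n → Fin 2 := fun _ => 1 with ho
  have hne : z ≠ o := by
    intro h
    have := congrFun h ⟨0, hn⟩
    simp [hz, ho] at this
  set c : ℂ := ((Real.sqrt 2 : ℂ))⁻¹ with hc
  have hgz : ghzN n z = c := by simp [ghzN, hz, hc]
  have hgo : ghzN n o = c := by simp [ghzN, ho, hc]
  have hg0 : ∀ f, f ≠ z → f ≠ o → ghzN n f = 0 := by
    intro f h1 h2
    simp [ghzN, hz, ho] at h1 h2 ⊢
    tauto
  have hstarc : star c = c := by
    rw [hc, star_inv₀]
    congr 1
    exact Complex.conj_ofReal _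
  have hcc : c * c = 2⁻¹ := by
    rw [hc, ← mul_inv, ← Complex.ofReal_mul, Real.mul_self_sqrt (by norm_num)]
    norm_num
  have hsum : ∀ v : (Fin n → Fin 2) → ℂ,
      (∀ f, f ≠ z → f ≠ o → v f = 0) → ∑ f, v f = v z + v o := by
    intro v hv
    rw [← Finset.sum_subset (Finset.subset_univ ({z, o} : Finset _))]
    · rw [Finset.sum_pair hne]
    · intro f _ hf
      simp only [Finset.mem_insert, Finset.mem_singleton] at hf
      push_neg at hf
      exact hv f hf.1 hf.2
  have hmv : ∀ f, (merminObs n x *ᵥ ghzN n) f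
      = merminObs n x f z * c + merminObs n x f o * c := by
    intro f
    rw [mulVec, dotProduct, hsum]
    · rw [hgz, hgo]
    · intro g h1 h2
      rw [hg0 g h1 h2, mul_zero]
  -- diagonal entries vanish
  have hdiag : ∀ f, merminObs n x f f = 0 := by
    intro f
    apply Finset.prod_eq_zero (Finset.mem_univ (⟨0, hn⟩ : Fin n))
    have key : ∀ a : Fin 2, pauliX a a = 0 ∧ pauliY a a = 0 := by
      intro a; fin_cases a <;> simp [pauliX, pauliY]
    by_cases h : x ⟨0, hn⟩ = 1 <;> simp only [h, if_true, if_false] <;>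
      [exact (key _).1; exact (key _).2]
  have hfilter : (Finset.univ.filter (fun i => ¬ x i = 1))
      = (Finset.univ.filter (fun i => x i = 0)) := by
    apply Finset.filter_congr
    intro i _
    simp [fin2_not_one]
  have hzo : merminObs n x z o = (-1 : ℂ) ^ k := by
    have : merminObs n x z o = ∏ i, (if x i = 1 then (1 : ℂ) else -Complex.I) := by
      rw [merminObs, Matrix.of_apply]
      apply Finset.prod_congr rfl
      intro i _
      by_cases h : x i = 1 <;> simp [h, pauliX, pauliY, hz, ho]
    rw [this, Finset.prod_ite, Finset.prod_const, Finset.prod_const, hfilter, hk, one_pow,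
      one_mul, pow_mul]
    norm_num [pow_two, Complex.I_mul_I]
  have hoz : merminObs n x o z = (-1 : ℂ) ^ k := by
    have : merminObs n x o z = ∏ i, (if x i = 1 then (1 : ℂ) else Complex.I) := by
      rw [merminObs, Matrix.of_apply]
      apply Finset.prod_congr rfl
      intro i _
      by_cases h : x i = 1 <;> simp [h, pauliX, pauliY, hz, ho]
    rw [this, Finset.prod_ite, Finset.prod_const, Finset.prod_const, hfilter, hk, one_pow,
      one_mul, pow_mul]
    norm_num [pow_two, Complex.I_mul_I]
  rw [dotProduct, hsum]
  · simp only [Pi.star_apply, hgz, hgo, hstarc, hmv, hdiag, hzo, hoz, zero_mul, mul_zero]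
    rw [show c * (0 + (-1:ℂ)^k * c) + c * ((-1:ℂ)^k * c + 0)
        = (c * c) * (2 * (-1:ℂ)^k) by ring, hcc]
    ring
  · intro f h1 h2
    simp [hg0 f h1 h2]
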